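/- Let N, M ≥ 1 and let 𝒬 ⊆ ℝ^{N×M} be a nonempty compact convex set, each element of which is row-stochastic with strictly positive entries and weakly symmetric (every row of Q is a permutation of its first row, and all column sums of Q are equal). Then the upper bound on the robust capacity is tight: sup_{p ∈ Δ_N} inf_{Q ∈ 𝒬} I(p,Q) = inf_{Q ∈ 𝒬} [ log N + Σ_{m=1}^M Q_{1m} log( Q_{1m} / Σ_{l=1}^N Q_{lm} ) ]. -/

import Mathlib

open Real

/-- Average mutual information `I(p,Q)`. -/
noncomputable def AMI {N M : ℕ} (p : Fin N → ℝ) (Q : Fin N → Fin M → ℝ) : ℝ :=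
  ∑ n, ∑ m, p n * Q n m * Real.log (Q n m / ∑ l, p l * Q l m)

/-- `Q` is row-stochastic with strictly positive entries. -/
def rowStochPos {N M : ℕ} (Q : Fin N → Fin M → ℝ) : Prop :=
  (∀ n m, 0 < Q n m) ∧ ∀ n, ∑ m, Q n m = 1

/-- A weakly symmetric channel: every row is a permutation of the first row,
and all column sums are equal. -/
def weaklySymmetric {N M : ℕ} (hN : 0 < N) (Q : Fin N → Fin M → ℝ) : Prop :=
  (∀ n : Fin N, ∃ σ : Equiv.Perm (Fin M), ∀ m, Q n m = Q ⟨0, hN⟩ (σ m)) ∧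
  (∀ m m' : Fin M, ∑ l, Q l m = ∑ l, Q l m')

/-- Robust channel capacity `sup_{p ∈ Δ_N} inf_{Q ∈ 𝒬} I(p,Q)`. -/
noncomputable def robustCap {N M : ℕ} (𝒬 : Set (Fin N → Fin M → ℝ)) : ℝ :=
  sSup { x | ∃ p ∈ stdSimplex ℝ (Fin N), x = sInf { y | ∃ Q ∈ 𝒬, y = AMI p Q } }

/-! For a weakly symmetric channel every row has the same negative entropy `h`, so
`I(p, Q) = h + H(pQ) ≤ h + log M` by Gibbs' inequality. The uniform input attains this bound
for every `Q` at once, because equal column sums force its output to be uniform. Hence the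
max-min is attained at the uniform input, where `I` is the bracket on the right-hand side. -/

open Finset

theorem sum_mul_log_div_nonneg {ι : Type*} [Fintype ι] {q r : ι → ℝ} (hq : ∀ i, 0 ≤ q i)
    (hr : ∀ i, 0 < r i) (hsum : ∑ i, r i ≤ ∑ i, q i) :
    0 ≤ ∑ i, q i * log (q i / r i) := by
  have hterm : ∀ i, q i - r i ≤ q i * log (q i / r i) := fun i => by
    have h := mul_le_mul_of_nonneg_left
      (self_sub_one_le_mul_log (div_nonneg (hq i) (hr i).le)) (hr i).le
    rwa [mul_sub, mul_one, ← mul_assoc, mul_div_cancel₀ _ (hr i).ne'] at h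
  calc 0 ≤ ∑ i, (q i - r i) := by rw [sum_sub_distrib]; linarith
    _ ≤ _ := sum_le_sum fun i _ => hterm i

theorem neg_log_card_le_sum_mul_log {ι : Type*} [Fintype ι] {q : ι → ℝ} (hq : ∀ i, 0 < q i)
    (hsum : ∑ i, q i = 1) :
    -log (Fintype.card ι) ≤ ∑ i, q i * log (q i) := by
  have hcard : (0 : ℝ) < Fintype.card ι := by
    obtain ⟨i, -⟩ := exists_ne_zero_of_sum_ne_zero (hsum.trans_ne one_ne_zero)
    exact Nat.cast_pos.2 (Fintype.card_pos_iff.2 ⟨i⟩)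
  have h := sum_mul_log_div_nonneg (fun i => (hq i).le) (r := fun _ => (Fintype.card ι : ℝ)⁻¹)
    (fun _ => inv_pos.2 hcard) (by simp [hsum, hcard.ne'])
  simp only [div_inv_eq_mul, log_mul (hq _).ne' hcard.ne', mul_add, sum_add_distrib,
    ← sum_mul, hsum, one_mul] at h
  linarith

theorem uniform_mem_stdSimplex {N : ℕ} (hN : 0 < N) :
    (fun _ => (N : ℝ)⁻¹) ∈ stdSimplex ℝ (Fin N) :=
  ⟨fun _ => by positivity, by simp [hN.ne']⟩

theorem sum_mul_pos_of_mem_stdSimplex {ι : Type*} [Fintype ι] {p a : ι → ℝ}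
    (hp : p ∈ stdSimplex ℝ ι) (ha : ∀ i, 0 < a i) : 0 < ∑ i, p i * a i := by
  obtain ⟨i, -, hi⟩ :=
    exists_lt_of_sum_lt (s := univ) (f := fun _ => (0 : ℝ)) (g := p) (by simp [hp.2])
  exact sum_pos' (fun j _ => mul_nonneg (hp.1 j) (ha j).le) ⟨i, mem_univ i, mul_pos hi (ha i)⟩

theorem sum_sum_mul_eq_one {ι κ : Type*} [Fintype ι] [Fintype κ] {p : ι → ℝ} {Q : ι → κ → ℝ}
    (hp : ∑ i, p i = 1) (hQ : ∀ i, ∑ j, Q i j = 1) : ∑ j, ∑ i, p i * Q i j = 1 := by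
  rw [sum_comm]
  simp [← mul_sum, hQ, hp]

section AMI

variable {N M : ℕ} {p : Fin N → ℝ} {Q : Fin N → Fin M → ℝ}

theorem AMI_nonneg (hp : p ∈ stdSimplex ℝ (Fin N)) (hQ : rowStochPos Q) : 0 ≤ AMI p Q := by
  refine sum_nonneg fun n _ => ?_
  simp only [mul_assoc, ← mul_sum]
  refine mul_nonneg (hp.1 n) (sum_mul_log_div_nonneg (fun m => (hQ.1 n m).le)
    (fun m => sum_mul_pos_of_mem_stdSimplex hp (hQ.1 · m)) ?_)
  rw [sum_sum_mul_eq_one hp.2 hQ.2, hQ.2 n]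

theorem AMI_eq_sub (hQ : ∀ n m, 0 < Q n m) (hq : ∀ m, 0 < ∑ l, p l * Q l m) :
    AMI p Q = ∑ n, p n * ∑ m, Q n m * log (Q n m)
      - ∑ m, (∑ l, p l * Q l m) * log (∑ l, p l * Q l m) := by
  simp only [AMI, log_div (hQ _ _).ne' (hq _).ne', mul_sub, sum_sub_distrib, mul_sum, mul_assoc]
  rw [sum_comm (f := fun n m => p n * (Q n m * log (∑ l, p l * Q l m)))]
  simp only [← mul_assoc, ← sum_mul]

theorem rowStochPos.ncols_pos (hQ : rowStochPos Q) (hN : 0 < N) : 0 < M := by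
  obtain ⟨m, -⟩ := exists_ne_zero_of_sum_ne_zero ((hQ.2 ⟨0, hN⟩).trans_ne one_ne_zero)
  exact m.pos

end AMI

namespace weaklySymmetric

variable {N M : ℕ} {hN : 0 < N} {p : Fin N → ℝ} {Q : Fin N → Fin M → ℝ}

theorem sum_comp_row (hsym : weaklySymmetric hN Q) (g : ℝ → ℝ) (n : Fin N) :
    ∑ m, g (Q n m) = ∑ m, g (Q ⟨0, hN⟩ m) := by
  obtain ⟨σ, hσ⟩ := hsym.1 n
  simp only [hσ]
  exact Equiv.sum_comp σ fun m => g (Q ⟨0, hN⟩ m)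

theorem sum_col_eq_div (hsym : weaklySymmetric hN Q) (hQ : ∀ n, ∑ m, Q n m = 1) (m : Fin M) :
    ∑ l, Q l m = N / M := by
  have htotal : ∑ m' : Fin M, ∑ l, Q l m' = N := by
    rw [sum_comm]
    simp [hQ]
  rw [sum_congr rfl fun m' _ => hsym.2 m' m] at htotal
  rw [eq_div_iff (Nat.cast_pos.2 m.pos).ne', ← htotal]
  simp [mul_comm]

theorem AMI_eq_row_sub (hsym : weaklySymmetric hN Q) (hp : p ∈ stdSimplex ℝ (Fin N))
    (hQ : rowStochPos Q) :
    AMI p Q = ∑ m, Q ⟨0, hN⟩ m * log (Q ⟨0, hN⟩ m)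
      - ∑ m, (∑ l, p l * Q l m) * log (∑ l, p l * Q l m) := by
  rw [AMI_eq_sub hQ.1 fun m => sum_mul_pos_of_mem_stdSimplex hp (hQ.1 · m)]
  simp only [hsym.sum_comp_row fun x => x * log x, ← sum_mul, hp.2, one_mul]

theorem AMI_uniform_eq_sum_mul_log_add_log (hsym : weaklySymmetric hN Q) (hQ : rowStochPos Q) :
    AMI (fun _ => (N : ℝ)⁻¹) Q = ∑ m, Q ⟨0, hN⟩ m * log (Q ⟨0, hN⟩ m) + log M := by
  have hout : ∀ m, ∑ l, (N : ℝ)⁻¹ * Q l m = (M : ℝ)⁻¹ := fun m => by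
    rw [← mul_sum, hsym.sum_col_eq_div hQ.2 m]
    field_simp
  rw [hsym.AMI_eq_row_sub (uniform_mem_stdSimplex hN) hQ]
  simp [hout, (Nat.cast_pos.2 (hQ.ncols_pos hN)).ne']

theorem AMI_le_AMI_uniform (hsym : weaklySymmetric hN Q) (hp : p ∈ stdSimplex ℝ (Fin N))
    (hQ : rowStochPos Q) : AMI p Q ≤ AMI (fun _ => (N : ℝ)⁻¹) Q := by
  have hentropy := neg_log_card_le_sum_mul_log
    (fun m => sum_mul_pos_of_mem_stdSimplex hp (hQ.1 · m)) (sum_sum_mul_eq_one hp.2 hQ.2)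
  rw [Fintype.card_fin] at hentropy
  rw [hsym.AMI_eq_row_sub hp hQ, hsym.AMI_uniform_eq_sum_mul_log_add_log hQ]
  linarith

theorem AMI_uniform_eq (hsym : weaklySymmetric hN Q) (hQ : rowStochPos Q) :
    AMI (fun _ => (N : ℝ)⁻¹) Q
      = log N + ∑ m, Q ⟨0, hN⟩ m * log (Q ⟨0, hN⟩ m / ∑ l, Q l m) := by
  have hM : (M : ℝ) ≠ 0 := (Nat.cast_pos.2 (hQ.ncols_pos hN)).ne'
  simp only [hsym.AMI_uniform_eq_sum_mul_log_add_log hQ, hsym.sum_col_eq_div hQ.2,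
    log_div (hQ.1 _ _).ne' (div_ne_zero (Nat.cast_pos.2 hN).ne' hM),
    log_div (Nat.cast_pos.2 hN).ne' hM, mul_sub, sum_sub_distrib, ← sum_mul, hQ.2]
  ring

end weaklySymmetric

theorem setOf_exists_mem_eq_image {α β : Type*} (s : Set α) (f : α → β) :
    {y | ∃ x ∈ s, y = f x} = f '' s := by
  ext
  simp [eq_comm]

theorem csInf_image_le_csInf_image {α β : Type*} [ConditionallyCompleteLattice β]
    {s : Set α} {f g : α → β} (hf : BddBelow (f '' s)) (hfg : ∀ x ∈ s, f x ≤ g x) :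
    sInf (f '' s) ≤ sInf (g '' s) := by
  rcases s.eq_empty_or_nonempty with rfl | hs
  · simp
  · exact le_csInf (hs.image g) (Set.forall_mem_image.2 fun x hx =>
      (csInf_le hf (Set.mem_image_of_mem f hx)).trans (hfg x hx))

theorem csSup_image_csInf_image_eq_of_forall_le {α β γ : Type*} [ConditionallyCompleteLattice γ]
    {s : Set α} {t : Set β} {F : α → β → γ} {a : α} (ha : a ∈ s)
    (hbdd : ∀ x ∈ s, BddBelow (F x '' t)) (hle : ∀ x ∈ s, ∀ y ∈ t, F x y ≤ F a y) :
    sSup ((fun x => sInf (F x '' t)) '' s) = sInf (F a '' t) :=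
  IsGreatest.csSup_eq ⟨Set.mem_image_of_mem _ ha, Set.forall_mem_image.2 fun x hx =>
    csInf_image_le_csInf_image (hbdd x hx) (hle x hx)⟩

theorem robust_capacity_weakly_symmetric_tight_general
    {N M : ℕ} (hN : 0 < N)
    (𝒬 : Set (Fin N → Fin M → ℝ))
    (hQ : ∀ Q ∈ 𝒬, rowStochPos Q)
    (hsym : ∀ Q ∈ 𝒬, weaklySymmetric hN Q) :
    robustCap 𝒬 =
      sInf { x | ∃ Q ∈ 𝒬,
        x = Real.log N +
          ∑ m, Q ⟨0, hN⟩ m * Real.log (Q ⟨0, hN⟩ m / ∑ l, Q l m) } := by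
  simp only [robustCap, setOf_exists_mem_eq_image]
  rw [csSup_image_csInf_image_eq_of_forall_le (F := AMI) (uniform_mem_stdSimplex hN)
    (fun p hp => ⟨0, Set.forall_mem_image.2 fun Q hQ' => AMI_nonneg hp (hQ Q hQ')⟩)
    (fun p hp Q hQ' => (hsym Q hQ').AMI_le_AMI_uniform hp (hQ Q hQ'))]
  exact congrArg sInf (Set.image_congr fun Q hQ' => (hsym Q hQ').AMI_uniform_eq (hQ Q hQ'))

theorem robust_capacity_weakly_symmetric_tight
    {N M : ℕ} (hN : 0 < N) (hM : 0 < M)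
    (𝒬 : Set (Fin N → Fin M → ℝ))
    (hne : 𝒬.Nonempty) (hcomp : IsCompact 𝒬) (hconv : Convex ℝ 𝒬)
    (hQ : ∀ Q ∈ 𝒬, rowStochPos Q)
    (hsym : ∀ Q ∈ 𝒬, weaklySymmetric hN Q) :
    robustCap 𝒬 =
      sInf { x | ∃ Q ∈ 𝒬,
        x = Real.log N +
          ∑ m, Q ⟨0, hN⟩ m * Real.log (Q ⟨0, hN⟩ m / ∑ l, Q l m) } :=
  robust_capacity_weakly_symmetric_tight_general hN 𝒬 hQ hsym
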